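/- Let k ≥ 1 be an integer, u0 ≥ 0, γ ∈ (0,1], η ∈ (0,1], and set ε = 1 − γ². Then for every x ∈ [−1/2, 1/2]: η^{2u0} · 2^{2k} · γ^{2k} · f(1/2 + x, γ, η) = Σ_{j=0}^k C(k,j) · (2x)^j · ( ε^j·(2−ε)^{k−j} − (1−η) )². -/

import Mathlib

/-! With `α = 1/2 + x` and `ε = 1 - γ²`, multiplying each of the three brackets of `f` by
`4γ²` makes its base affine in `2x`: the bases become `2xε² + (2-ε)²`, `2xε + (2-ε)` and
`2x + 1`. Expanding the square on the right-hand side gives exactly the binomial expansions of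
the `k`-th powers of these three bases. -/

open Real Finset

noncomputable section

/-- `f(α,γ,η)` from eq. (7) of the paper. -/
def ff (k : ℕ) (u0 α γ η : ℝ) : ℝ :=
  η ^ (-(2*u0)) *
    ((α * ((γ^2 + (γ^2)⁻¹)/2) + 1 - α)^k
      - 2*(1-η) * ((α * (γ^2)⁻¹ + (1-α))/2)^k
      + (1-η)^2 * (α * (γ^2)⁻¹/2)^k)

theorem sum_choose_mul_pow_mul_sq_sub {R : Type*} [CommRing R] (k : ℕ) (t a b c : R) :
    ∑ j ∈ range (k+1), (k.choose j : R) * t^j * (a^j * b^(k-j) - c)^2 =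
      (t*a^2 + b^2)^k - 2*c*(t*a + b)^k + c^2*(t + 1)^k := by
  rw [add_pow, add_pow, add_pow, mul_sum, mul_sum, ← sum_sub_distrib, ← sum_add_distrib]
  refine sum_congr rfl fun j _ => ?_
  ring

theorem four_mul_sq_pow_mul_ff_bracket (k : ℕ) {γ : ℝ} (hγ : γ ≠ 0) (x c : ℝ) :
    2^(2*k) * γ^(2*k) *
      (((1/2 + x) * ((γ^2 + (γ^2)⁻¹)/2) + 1 - (1/2 + x))^k
        - 2*c * (((1/2 + x) * (γ^2)⁻¹ + (1 - (1/2 + x)))/2)^k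
        + c^2 * ((1/2 + x) * (γ^2)⁻¹/2)^k) =
      (2*x*(1-γ^2)^2 + (2-(1-γ^2))^2)^k - 2*c*(2*x*(1-γ^2) + (2-(1-γ^2)))^k
        + c^2*(2*x + 1)^k := by
  have hA : 4*γ^2 * ((1/2 + x) * ((γ^2 + (γ^2)⁻¹)/2) + 1 - (1/2 + x)) =
      2*x*(1-γ^2)^2 + (2-(1-γ^2))^2 := by
    field_simp; ring
  have hB : 4*γ^2 * (((1/2 + x) * (γ^2)⁻¹ + (1 - (1/2 + x)))/2) =
      2*x*(1-γ^2) + (2-(1-γ^2)) := by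
    field_simp; ring
  have hC : 4*γ^2 * ((1/2 + x) * (γ^2)⁻¹/2) = 2*x + 1 := by
    field_simp; ring
  rw [pow_mul, pow_mul, ← mul_pow, ← hA, ← hB, ← hC]
  simp only [mul_pow]
  ring

theorem f_binomial_identity (k : ℕ) (u0 γ η : ℝ)
    (hγ0 : 0 < γ) (hη0 : 0 < η)
    (x : ℝ) :
    η ^ (2*u0) * 2^(2*k) * γ^(2*k) * ff k u0 (1/2 + x) γ η =
      ∑ j ∈ Finset.range (k+1),
        (k.choose j : ℝ) * (2*x)^j *
          ((1-γ^2)^j * (2-(1-γ^2))^(k-j) - (1-η))^2 := by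
  have hη : η ^ (2*u0) ≠ 0 := (rpow_pos_of_pos hη0 _).ne'
  rw [sum_choose_mul_pow_mul_sq_sub, ← four_mul_sq_pow_mul_ff_bracket k hγ0.ne', ff,
    rpow_neg hη0.le]
  field_simp

end
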